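/- arXiv:1011.5003 — 3 statements merged into one kernel-verified Lean document; each statement's English description precedes it below -/
import Mathlib

section
/- Let g be α-Hölder continuous on the unit circle T with α > 1/2. Then the image g(T) has empty interior in the complex plane. -/
/-!
A Hölder map of exponent `α` multiplies Hausdorff dimension by at most `1 / α`. The circle has
dimension `1` (it is a Lipschitz image of `ℝ`), so its image under `g` has dimension at most
`1 / α < 2`, while a subset of `ℂ` with nonempty interior has dimension `2`.
-/

open Metric Set
open scoped NNReal ENNReal

theorem dimH_sphere_le_one (c : ℂ) (r : ℝ) : dimH (sphere c r) ≤ 1 := by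
  rcases lt_or_ge r 0 with hr | hr
  · simp [sphere_eq_empty_of_neg hr]
  · calc dimH (sphere c r) = dimH (range (circleMap c r)) := by
          rw [range_circleMap, abs_of_nonneg hr]
      _ ≤ dimH (univ : Set ℝ) := (lipschitzWith_circleMap c r).dimH_range_le
      _ = 1 := Real.dimH_univ

theorem HolderOnWith.interior_image_eq_empty {X E : Type*} [EMetricSpace X]
    [NormedAddCommGroup E] [NormedSpace ℝ E] [FiniteDimensional ℝ E]
    {C α : ℝ≥0} {g : X → E} {s : Set X} (hg : HolderOnWith C α g s) (hα : 0 < α)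
    (hdim : dimH s / α < Module.finrank ℝ E) : interior (g '' s) = ∅ := by
  by_contra h
  have hfull : dimH (g '' s) = Module.finrank ℝ E :=
    Real.dimH_of_nonempty_interior (nonempty_iff_ne_empty.mpr h)
  exact (hfull ▸ hg.dimH_image_le hα).not_gt hdim

theorem stmt5 (g : ℂ → ℂ) (α C : ℝ≥0) (hα : 1 / 2 < (α : ℝ))
    (hg : HolderOnWith C α g (sphere (0:ℂ) 1)) :
    interior (g '' sphere (0:ℂ) 1) = ∅ := by
  have hα₀ : 0 < α := by exact_mod_cast (one_half_pos.trans hα)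
  have hinv : (1 : ℝ≥0∞) / α < 2 := by
    rw [ENNReal.div_lt_iff (Or.inl (by exact_mod_cast hα₀.ne')) (Or.inl ENNReal.coe_ne_top)]
    have : (1 : ℝ≥0) < 2 * α := by exact_mod_cast (by linarith : (1 : ℝ) < 2 * α)
    exact_mod_cast this
  refine hg.interior_image_eq_empty hα₀ ?_
  calc dimH (sphere (0:ℂ) 1) / α ≤ 1 / α := ENNReal.div_le_div_right (dimH_sphere_le_one 0 1) _
    _ < 2 := hinv
    _ = Module.finrank ℝ ℂ := by rw [Complex.finrank_real_complex]; rfl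
end

section
/- There exists a family of polynomials ℓ_{m,k} in m variables, indexed by integers k > m, such that a holomorphic function g on the unit disk with expansion g(z) = z^m + Σ_{k≥1}(g)_k z^{m+k} satisfies g(z) = z^m/d(z) for some polynomial d of degree at most m with d(0)=1 and d nonvanishing on D, if and only if (g)_k = ℓ_{m,k}((g)_1, ..., (g)_m) for all k > m. -/
/-!
Writing `g = z^m G` with `G(0) = 1`, we have `g = z^m / d` iff `d G = 1` as power series, since
the Taylor series of `g` converges on the whole disk. If such a `d` of degree `≤ m` exists, it
is forced to be the truncation of `1/G` at order `m`, and this truncation depends only on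
`(g)_1, …, (g)_m`. So `ℓ_{m,k}` is the `k`-th coefficient of the reciprocal of that truncation,
computed generically over `ℂ[X₀, …, X_{m-1}]`.
-/

open Metric Set

/-- The `n`-th Taylor coefficient of `g` at the origin. -/
noncomputable def coeffAt (g : ℂ → ℂ) (n : ℕ) : ℂ :=
  iteratedDeriv n g 0 / (n.factorial : ℂ)

open PowerSeries
open scoped Polynomial

theorem PowerSeries.trunc_eq_trunc_of_mul_eq_one {R : Type*} [CommSemiring R] {n : ℕ}
    {φ ψ φ' ψ' : R⟦X⟧} (h : φ * ψ = 1)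
    (h' : φ' * ψ' = 1) (hφ : trunc n φ = trunc n φ') : trunc n ψ = trunc n ψ' := by
  have hψφ : trunc n (ψ * φ') = trunc n (ψ * φ) := by
    rw [← trunc_mul_trunc, ← hφ, trunc_mul_trunc]
  calc trunc n ψ = trunc n (ψ * φ' * ψ') := by rw [mul_assoc, h', mul_one]
    _ = trunc n (ψ * φ * ψ') := by rw [← trunc_trunc_mul, hψφ, trunc_trunc_mul]
    _ = trunc n ψ' := by rw [mul_comm ψ φ, h, one_mul]

variable {R : Type*} [CommRing R]

/-- `1 + X₀ t + ⋯ + X_{m-1} t^m`: the indeterminate `Xⱼ` stands for the coefficient `(g)_{j+1}`. -/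
noncomputable def genericTrunc (m : ℕ) : (MvPolynomial (Fin m) R)⟦X⟧ :=
  mk fun k => if k = 0 then 1 else if h : k - 1 < m then MvPolynomial.X ⟨k - 1, h⟩ else 0

noncomputable def genericDenom (m : ℕ) : (MvPolynomial (Fin m) R)[X] :=
  trunc (m + 1) (invOfUnit (genericTrunc m) 1)

noncomputable def ellPoly (m k : ℕ) : MvPolynomial (Fin m) R :=
  coeff k (invOfUnit (genericDenom (R := R) m : (MvPolynomial (Fin m) R)⟦X⟧) 1)

theorem constantCoeff_genericTrunc (m : ℕ) :
    constantCoeff (genericTrunc m : (MvPolynomial (Fin m) R)⟦X⟧) = 1 := by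
  simp [genericTrunc, ← coeff_zero_eq_constantCoeff_apply]

theorem constantCoeff_genericDenom (m : ℕ) :
    constantCoeff (genericDenom (R := R) m : (MvPolynomial (Fin m) R)⟦X⟧) = 1 := by
  rw [← coeff_zero_eq_constantCoeff_apply, Polynomial.coeff_coe, genericDenom, coeff_trunc,
    if_pos m.succ_pos, coeff_zero_eq_constantCoeff_apply, constantCoeff_invOfUnit, inv_one,
    Units.val_one]

theorem map_eval_genericTrunc (m : ℕ) (A : R⟦X⟧) (hA : constantCoeff A = 1) :
    map (MvPolynomial.eval fun j : Fin m => coeff (j + 1) A) (genericTrunc m) =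
      trunc (m + 1) A := by
  ext k
  rw [coeff_map, Polynomial.coeff_coe, coeff_trunc, genericTrunc, coeff_mk]
  rcases Nat.eq_zero_or_pos k with rfl | hk
  · simp [hA]
  · by_cases hkm : k - 1 < m
    · simp [hk.ne', hkm, show k < m + 1 by omega, Nat.sub_add_cancel hk]
    · simp [hk.ne', hkm, show ¬ k < m + 1 by omega]

theorem exists_natDegree_le_mul_eq_one_iff (m : ℕ) (A : R⟦X⟧) (hA : constantCoeff A = 1) :
    (∃ d : R[X], d.natDegree ≤ m ∧ (d : R⟦X⟧) * A = 1) ↔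
      ∀ k, m < k →
        coeff k A = MvPolynomial.eval (fun j : Fin m => coeff (j + 1) A) (ellPoly m k) := by
  -- `E = 1 / trunc A`, `d₀ = trunc E` is the only candidate for `d`, and `D = 1 / d₀`.
  set f := MvPolynomial.eval fun j : Fin m => coeff (j + 1) A
  set E := map f (invOfUnit (genericTrunc m) 1)
  set d₀ := (genericDenom m).map f
  set D := map f (invOfUnit (genericDenom (R := R) m : (MvPolynomial (Fin m) R)⟦X⟧) 1)
  have hPE : (trunc (m + 1) A : R⟦X⟧) * E = 1 := by
    rw [← map_eval_genericTrunc m A hA, ← map_mul,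
      mul_invOfUnit _ _ (by rw [constantCoeff_genericTrunc, Units.val_one]), map_one]
  have hdD : (d₀ : R⟦X⟧) * D = 1 := by
    rw [Polynomial.polynomial_map_coe, ← map_mul,
      mul_invOfUnit _ _ (by rw [constantCoeff_genericDenom, Units.val_one]), map_one]
  have hd₀ : d₀ = trunc (m + 1) E := (trunc_map _ _ _).symm
  have hD : trunc (m + 1) D = trunc (m + 1) A := by
    refine (trunc_eq_trunc_of_mul_eq_one hdD ((mul_comm _ _).trans hPE) ?_).trans (trunc_trunc A)
    rw [hd₀, trunc_trunc]
  have hell : ∀ k, f (ellPoly m k) = coeff k D := fun k => (coeff_map _ _ _).symm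
  simp only [hell]
  constructor
  · rintro ⟨d, hdeg, hdA⟩ k -
    have hdd₀ : d = d₀ := by
      rw [hd₀, ← trunc_coe_eq_self (Nat.lt_succ_of_le hdeg)]
      exact trunc_eq_trunc_of_mul_eq_one (by rwa [mul_comm]) hPE (trunc_trunc A).symm
    have hAD : A = D :=
      left_inv_eq_right_inv (a := (d : R⟦X⟧)) (by rw [mul_comm, hdA]) (by rw [hdd₀, hdD])
    rw [hAD]
  · intro hcoeff
    have hAD : A = D := by
      ext k
      rcases le_or_gt k m with hkm | hkm
      · rw [← coeff_coe_trunc_of_lt (Nat.lt_succ_of_le hkm), ← hD,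
          coeff_coe_trunc_of_lt (Nat.lt_succ_of_le hkm)]
      · exact hcoeff k hkm
    exact ⟨d₀, hd₀ ▸ Nat.lt_succ_iff.mp (natDegree_trunc_lt E m), hAD ▸ hdD⟩

theorem HasSum.coeff_polynomial_mul {R : Type*} [CommSemiring R] [TopologicalSpace R]
    [IsTopologicalSemiring R] {c : ℕ → R} {z s : R} (hs : HasSum (fun n => c n * z ^ n) s)
    (d : R[X]) : HasSum (fun n => coeff n ((d : R⟦X⟧) * mk c) * z ^ n) (d.eval z * s) := by
  induction d using Polynomial.induction_on' with
  | add p q hp hq =>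
    simpa only [Polynomial.coe_add, add_mul, map_add, Polynomial.eval_add] using hp.add hq
  | monomial i a =>
    rw [Polynomial.coe_monomial, monomial_eq_C_mul_X_pow, mul_assoc]
    simp only [coeff_C_mul]
    rw [← (add_left_injective i).hasSum_iff]
    · have hshift : (fun n => a * coeff n (X ^ i * mk c) * z ^ n) ∘ (· + i) =
          fun n => a * z ^ i * (c n * z ^ n) := by
        ext n
        simp only [Function.comp_apply, coeff_X_pow_mul, coeff_mk]
        ring
      rw [hshift, Polynomial.eval_monomial]
      exact hs.mul_left (a * z ^ i)
    · intro n hn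
      rw [coeff_X_pow_mul', if_neg (fun h => hn ⟨n - i, Nat.sub_add_cancel h⟩), mul_zero, zero_mul]

theorem eq_of_eventually_hasSum_mul_pow {𝕜 : Type*} [NontriviallyNormedField 𝕜] {a b : ℕ → 𝕜}
    {f : 𝕜 → 𝕜} (ha : ∀ᶠ z in nhds 0, HasSum (fun n => a n * z ^ n) (f z))
    (hb : ∀ᶠ z in nhds 0, HasSum (fun n => b n * z ^ n) (f z)) : a = b := by
  have hasFPowerSeriesAt_ofScalars : ∀ c : ℕ → 𝕜,
      (∀ᶠ z in nhds 0, HasSum (fun n => c n * z ^ n) (f z)) →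
      HasFPowerSeriesAt f (FormalMultilinearSeries.ofScalars 𝕜 c) 0 := by
    intro c hc
    rw [hasFPowerSeriesAt_iff]
    simpa [mul_comm] using hc
  exact FormalMultilinearSeries.ofScalars_series_injective 𝕜 𝕜
    ((hasFPowerSeriesAt_ofScalars a ha).eq_formalMultilinearSeries
      (hasFPowerSeriesAt_ofScalars b hb))

theorem hasSum_coeffAt_mul_pow {g : ℂ → ℂ} {r : ℝ} (hg : DifferentiableOn ℂ g (ball 0 r))
    {z : ℂ} (hz : z ∈ ball 0 r) : HasSum (fun n => coeffAt g n * z ^ n) (g z) := by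
  refine (Complex.hasSum_taylorSeries_on_ball hg hz).congr_fun fun n => ?_
  simp only [coeffAt, smul_eq_mul, sub_zero]
  ring

theorem mul_eval_eq_pow_iff {g : ℂ → ℂ} {r : ℝ} (hg : DifferentiableOn ℂ g (ball 0 r))
    (hr : 0 < r) (d : ℂ[X]) (m : ℕ) :
    (∀ z ∈ ball 0 r, g z * d.eval z = z ^ m) ↔ (d : ℂ⟦X⟧) * mk (coeffAt g) = X ^ m := by
  have hdg : ∀ z ∈ ball (0 : ℂ) r,
      HasSum (fun n => coeff n ((d : ℂ⟦X⟧) * mk (coeffAt g)) * z ^ n) (d.eval z * g z) :=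
    fun z hz => (hasSum_coeffAt_mul_pow hg hz).coeff_polynomial_mul d
  have hpow : ∀ z : ℂ, HasSum (fun n => coeff n (X ^ m : ℂ⟦X⟧) * z ^ n) (z ^ m) := by
    intro z
    convert hasSum_single (f := fun n => coeff n (X ^ m : ℂ⟦X⟧) * z ^ n) m
      fun n hn => by simp [coeff_X_pow, hn]
    simp
  constructor
  · intro h
    ext n
    refine congrFun (eq_of_eventually_hasSum_mul_pow (a := fun n => coeff n _) (f := (· ^ m)) ?_
      (Filter.Eventually.of_forall hpow)) n
    filter_upwards [ball_mem_nhds (0 : ℂ) hr] with z hz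
    rw [← h z hz, mul_comm (g z)]
    exact hdg z hz
  · intro h z hz
    rw [mul_comm]
    exact (h ▸ hdg z hz).unique (hpow z)

theorem Polynomial.eval_ne_zero_of_mul_eval_eq_pow {K : Type*} [CommRing K] [IsDomain K]
    {g : K → K} {s : Set K} {d : K[X]} {m : ℕ}
    (hd : d.coeff 0 = 1) (h : ∀ z ∈ s, g z * d.eval z = z ^ m) : ∀ z ∈ s, d.eval z ≠ 0 := by
  intro z hz hdz
  rcases eq_or_ne z 0 with rfl | hz0
  · rw [← Polynomial.coeff_zero_eq_eval_zero, hd] at hdz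
    exact one_ne_zero hdz
  · exact pow_ne_zero m hz0 (by rw [← h z hz, hdz, mul_zero])

theorem stmt9_general (m : ℕ) :
    ∃ ℓ : ℕ → MvPolynomial (Fin m) ℂ,
      ∀ g : ℂ → ℂ, DifferentiableOn ℂ g (ball (0:ℂ) 1) →
        (∀ k < m, iteratedDeriv k g 0 = 0) →
        iteratedDeriv m g 0 = (m.factorial : ℂ) →
        ((∃ d : Polynomial ℂ, d.natDegree ≤ m ∧ d.coeff 0 = 1 ∧
            (∀ z ∈ ball (0:ℂ) 1, d.eval z ≠ 0) ∧
            ∀ z ∈ ball (0:ℂ) 1, g z * d.eval z = z ^ m) ↔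
          ∀ k : ℕ, m < k →
            coeffAt g (m + k) =
              MvPolynomial.eval (fun j : Fin m => coeffAt g (m + ((j : ℕ) + 1))) (ℓ k)) := by
  refine ⟨ellPoly m, fun g hg hlow htop => ?_⟩
  set A : ℂ⟦X⟧ := mk fun k => coeffAt g (m + k)
  have hA : constantCoeff A = 1 := by
    simp [A, coeffAt, htop, Nat.factorial_ne_zero]
  have hgA : mk (coeffAt g) = X ^ m * A := by
    ext n
    rw [coeff_X_pow_mul', coeff_mk]
    split_ifs with hmn
    · simp [A, Nat.add_sub_cancel' hmn]
    · simp [coeffAt, hlow n (by omega)]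
  have hdA : ∀ d : ℂ[X], (d : ℂ⟦X⟧) * mk (coeffAt g) = X ^ m ↔ (d : ℂ⟦X⟧) * A = 1 := by
    intro d
    rw [hgA, mul_left_comm]
    exact (mul_right_injective₀ (pow_ne_zero m X_ne_zero)).eq_iff' (mul_one _)
  calc _ ↔ ∃ d : ℂ[X], d.natDegree ≤ m ∧ (d : ℂ⟦X⟧) * A = 1 := by
        refine exists_congr fun d => and_congr_right fun _ => ⟨fun ⟨_, _, hid⟩ => ?_, fun h => ?_⟩
        · exact (hdA d).1 ((mul_eval_eq_pow_iff hg one_pos d m).1 hid)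
        · have hid := (mul_eval_eq_pow_iff hg one_pos d m).2 ((hdA d).2 h)
          have hd : d.coeff 0 = 1 := by simpa [hA] using congrArg constantCoeff h
          exact ⟨hd, Polynomial.eval_ne_zero_of_mul_eval_eq_pow hd hid, hid⟩
    _ ↔ _ := by simpa [A] using exists_natDegree_le_mul_eq_one_iff m A hA

theorem stmt9 (m : ℕ) (hm : 0 < m) :
    ∃ ℓ : ℕ → MvPolynomial (Fin m) ℂ,
      ∀ g : ℂ → ℂ, DifferentiableOn ℂ g (ball (0:ℂ) 1) →
        (∀ k < m, iteratedDeriv k g 0 = 0) →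
        iteratedDeriv m g 0 = (m.factorial : ℂ) →
        ((∃ d : Polynomial ℂ, d.natDegree ≤ m ∧ d.coeff 0 = 1 ∧
            (∀ z ∈ ball (0:ℂ) 1, d.eval z ≠ 0) ∧
            ∀ z ∈ ball (0:ℂ) 1, g z * d.eval z = z ^ m) ↔
          ∀ k : ℕ, m < k →
            coeffAt g (m + k) =
              MvPolynomial.eval (fun j : Fin m => coeffAt g (m + ((j : ℕ) + 1))) (ℓ k)) :=
  stmt9_general m
end

section
/- If g(z) = z^m/d(z) with d a polynomial of degree at most m, d(0)=1, d nonvanishing on the unit disk (so g ∈ B_m), then for every a with |a| < 1/4^m, the transformed function g^a(z) = c z^m (g(z) - a)/((z - z_1)...(z - z_m)) equals g itself, where z_1,...,z_m are the solutions of g(z) = a in D and c is chosen so that z^{-m} g^a(z) → 1 as z → 0. -/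
/-!
Writing `g = z^m / d`, the factorization `g - a = u ∏ (z - w j)` says that `u d ∏ (z - w j)` is
the polynomial `z^m - a d`, of degree at most `m`. Dividing out the roots `w j` one at a time
(with multiplicity, using continuity of `u d` at each of them) shows that `u d` is a polynomial
of degree `0`, i.e. the constant `u 0`. Hence `g^a = c z^m u = c u(0) z^m / d`, and the
normalization at `0` forces `c u(0) = 1`.
-/

open Metric Set Filter

/-- `ga` is the transform `g^a` of `g`: there are points `w 1, ..., w m` of the
unit disk which are the solutions of `g = a` counted with multiplicity (i.e.
`g - a = u * ∏ (z - w j)` with `u` holomorphic and nonvanishing), and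
`ga(z) = c z^m (g(z) - a) / ∏ (z - w j)` is holomorphic, normalized so that
`z^{-m} ga(z) → 1` as `z → 0`. -/
def IsTransform (m : ℕ) (g : ℂ → ℂ) (a : ℂ) (ga : ℂ → ℂ) : Prop :=
  ∃ (w : Fin m → ℂ) (c : ℂ) (u : ℂ → ℂ),
    (∀ j, w j ∈ ball (0:ℂ) 1) ∧
    DifferentiableOn ℂ u (ball (0:ℂ) 1) ∧ (∀ z ∈ ball (0:ℂ) 1, u z ≠ 0) ∧
    (∀ z ∈ ball (0:ℂ) 1, g z - a = u z * ∏ j, (z - w j)) ∧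
    DifferentiableOn ℂ ga (ball (0:ℂ) 1) ∧
    (∀ z ∈ ball (0:ℂ) 1, ga z * ∏ j, (z - w j) = c * z ^ m * (g z - a)) ∧
    Tendsto (fun z => ga z / z ^ m) (nhdsWithin (0:ℂ) {0}ᶜ) (nhds 1)

open Polynomial Topology

section Cancellation

variable {𝕜 : Type*} [NontriviallyNormedField 𝕜] {s : Set 𝕜}

theorem eqOn_of_mul_eval_eq (hs : IsOpen s) {f h : 𝕜 → 𝕜} (hf : ContinuousOn f s)
    (hh : ContinuousOn h s) {p : 𝕜[X]} (hp : p ≠ 0)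
    (heq : ∀ z ∈ s, f z * p.eval z = h z * p.eval z) : EqOn f h s := by
  have hdense : Dense {z | p.IsRoot z}ᶜ := by
    simpa only [← compl_eq_univ_sdiff] using dense_univ.sdiff_finite (finite_setOfPred_isRoot hp)
  refine EqOn.of_subset_closure (fun z hz => ?_) hf hh inter_subset_left
    (hdense.open_subset_closure_inter hs)
  exact mul_right_cancel₀ hz.2 (heq z hz.1)

theorem exists_eq_X_sub_C_mul_of_continuousOn (hs : IsOpen s) {w : 𝕜} (hw : w ∈ s)
    {f : 𝕜 → 𝕜} (hf : ContinuousOn f s) {P : 𝕜[X]}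
    (h : ∀ z ∈ s, f z * (z - w) = P.eval z) :
    ∃ Q : 𝕜[X], P = (X - C w) * Q ∧ EqOn f Q.eval s := by
  obtain ⟨Q, hQ⟩ := dvd_iff_isRoot.2 (by simpa using (h w hw).symm)
  refine ⟨Q, hQ, eqOn_of_mul_eval_eq hs hf Q.continuousOn (X_sub_C_ne_zero w) fun z hz => ?_⟩
  simp only [eval_sub, eval_X, eval_C]
  rw [h z hz, hQ, eval_mul, mul_comm]
  simp

theorem exists_eq_prod_X_sub_C_mul_of_continuousOn (hs : IsOpen s) {ι : Type*}
    (t : Finset ι) {w : ι → 𝕜} (hw : ∀ j ∈ t, w j ∈ s) {f : 𝕜 → 𝕜}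
    (hf : ContinuousOn f s) {P : 𝕜[X]} (h : ∀ z ∈ s, f z * ∏ j ∈ t, (z - w j) = P.eval z) :
    ∃ Q : 𝕜[X], P = (∏ j ∈ t, (X - C (w j))) * Q ∧ EqOn f Q.eval s := by
  classical
  induction t using Finset.induction generalizing f P with
  | empty => exact ⟨P, by simp, fun z hz => by simpa using h z hz⟩
  | @insert j t hj ih =>
    obtain ⟨Q₁, hPQ₁, hfQ₁⟩ := exists_eq_X_sub_C_mul_of_continuousOn hs
      (hw j (Finset.mem_insert_self j t)) (f := fun z => f z * ∏ i ∈ t, (z - w i))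
      (hf.mul (by fun_prop)) fun z hz => by
        rw [← h z hz, Finset.prod_insert hj]
        ring
    obtain ⟨Q, hQ₁Q, hfQ⟩ := ih (fun i hi => hw i (Finset.mem_insert_of_mem hi)) hf hfQ₁
    refine ⟨Q, ?_, hfQ⟩
    rw [hPQ₁, hQ₁Q, Finset.prod_insert hj, mul_assoc]

theorem exists_eqOn_const_of_mul_prod_eq_eval (hs : IsOpen s) {m : ℕ} {w : Fin m → 𝕜}
    (hw : ∀ j, w j ∈ s) {f : 𝕜 → 𝕜} (hf : ContinuousOn f s) {P : 𝕜[X]}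
    (hP : P.natDegree ≤ m) (h : ∀ z ∈ s, f z * ∏ j, (z - w j) = P.eval z) :
    ∃ k : 𝕜, EqOn f (fun _ => k) s := by
  obtain ⟨Q, hPQ, hfQ⟩ :=
    exists_eq_prod_X_sub_C_mul_of_continuousOn hs Finset.univ (fun j _ => hw j) hf h
  have hQ : Q.natDegree = 0 := by
    rcases eq_or_ne Q 0 with rfl | hQ
    · simp
    have := (monic_prod_X_sub_C w Finset.univ).natDegree_mul' hQ
    rw [← hPQ, natDegree_finsetProd_X_sub_C_eq_card, Finset.card_univ, Fintype.card_fin] at this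
    omega
  refine ⟨Q.coeff 0, fun z hz => (hfQ hz).trans ?_⟩
  show Q.eval z = Q.coeff 0
  conv_lhs => rw [eq_C_of_natDegree_eq_zero hQ]
  exact eval_C

theorem eq_one_of_tendsto_div_pow {m : ℕ} {f φ : 𝕜 → 𝕜} (hφ : ContinuousAt φ 0)
    (hf : ∀ᶠ z in 𝓝 0, f z = z ^ m * φ z)
    (hlim : Tendsto (fun z => f z / z ^ m) (𝓝[≠] 0) (𝓝 1)) : φ 0 = 1 := by
  refine tendsto_nhds_unique (hφ.tendsto.mono_left nhdsWithin_le_nhds) (hlim.congr' ?_)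
  filter_upwards [self_mem_nhdsWithin, nhdsWithin_le_nhds hf] with z hz hfz
  rw [hfz, mul_div_cancel_left₀ _ (pow_ne_zero m hz)]

end Cancellation

theorem stmt11_general (m : ℕ) (g : ℂ → ℂ) (d : Polynomial ℂ)
    (hdm : d.natDegree ≤ m) (hd0 : d.coeff 0 = 1)
    (hdne : ∀ z ∈ ball (0:ℂ) 1, d.eval z ≠ 0)
    (hgd : ∀ z ∈ ball (0:ℂ) 1, g z * d.eval z = z ^ m)
    (a : ℂ)
    (ga : ℂ → ℂ) (hga : IsTransform m g a ga) :
    ∀ z ∈ ball (0:ℂ) 1, ga z = g z := by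
  obtain ⟨w, c, u, hw, hu, -, hgw, hgahol, hgaw, hlim⟩ := hga
  have h0 : (0 : ℂ) ∈ ball (0 : ℂ) 1 := mem_ball_self one_pos
  have hd00 : d.eval 0 = 1 := by rw [← coeff_zero_eq_eval_zero, hd0]
  obtain ⟨k, hk⟩ := exists_eqOn_const_of_mul_prod_eq_eval isOpen_ball hw
    (f := fun z => u z * d.eval z) (hu.continuousOn.mul d.continuousOn) (P := X ^ m - C a * d)
    ((natDegree_sub_le _ _).trans (max_le (natDegree_X_pow_le m)
      ((natDegree_C_mul_le a d).trans hdm))) fun z hz => by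
        simp only [eval_sub, eval_pow, eval_X, eval_mul, eval_C]
        linear_combination -d.eval z * hgw z hz + hgd z hz
  have hk0 : k = u 0 := by simpa [hd00] using (hk h0).symm
  have hgau : EqOn ga (fun z => c * z ^ m * u z) (ball 0 1) :=
    eqOn_of_mul_eval_eq isOpen_ball hgahol.continuousOn (by have := hu.continuousOn; fun_prop)
      (monic_prod_X_sub_C w Finset.univ).ne_zero fun z hz => by
        simp only [eval_prod, eval_sub, eval_X, eval_C]
        linear_combination hgaw z hz + c * z ^ m * hgw z hz
  have hcu : c * u 0 = 1 := eq_one_of_tendsto_div_pow (φ := fun z => c * u z)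
    ((hu.differentiableAt (isOpen_ball.mem_nhds h0)).continuousAt.const_mul c)
    (eventually_of_mem (isOpen_ball.mem_nhds h0) fun z hz => by rw [hgau hz]; ring) hlim
  intro z hz
  apply mul_right_cancel₀ (hdne z hz)
  linear_combination c * z ^ m * hk hz + d.eval z * hgau hz + z ^ m * hcu - hgd z hz
    + c * z ^ m * hk0

theorem stmt11 (m : ℕ) (hm : 0 < m) (g : ℂ → ℂ) (d : Polynomial ℂ)
    (hdm : d.natDegree ≤ m) (hd0 : d.coeff 0 = 1)
    (hdne : ∀ z ∈ ball (0:ℂ) 1, d.eval z ≠ 0)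
    (hgd : ∀ z ∈ ball (0:ℂ) 1, g z * d.eval z = z ^ m)
    (hghol : DifferentiableOn ℂ g (ball (0:ℂ) 1))
    (a : ℂ) (ha : ‖a‖ < 1 / 4 ^ m)
    (ga : ℂ → ℂ) (hga : IsTransform m g a ga) :
    ∀ z ∈ ball (0:ℂ) 1, ga z = g z :=
  stmt11_general m g d hdm hd0 hdne hgd a ga hga
end
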